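/- Let H be a complex Hilbert space, let p ≥ 1, and let A₁,…,A_p be bounded linear operators on H, with companion operator 𝒜 on H^p defined by 𝒜(x₁,…,x_p) = (Σ_{i=1}^p A_i x_i, x₁, …, x_{p−1}). Suppose that for every z ∈ ℂ with |z| ≤ 1 the operator A(z) = I_H − z·A₁ − ⋯ − z^p·A_p is invertible (Assumption (S)). Then the spectral radius of 𝒜, i.e. sup{|w| : w belongs to the spectrum of 𝒜}, is strictly less than 1. -/

import Mathlib

/-!
Fix `w` with `|w| ≥ 1` and put `z = w⁻¹`. The equation `(w - 𝒜) x = y` reads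
`w x₀ - Σ Aᵢ xᵢ = y₀` and `w x_{j+1} - x_j = y_{j+1}`. The second family is solved by
back substitution, `xᵢ = zⁱ x₀ + gᵢ` with `g` depending only on `y`, and the first then becomes
`A(z) x₀ = z (y₀ + Σ Aᵢ gᵢ)`. Since `|z| ≤ 1`, `A(z)` is invertible by Assumption (S), so the
equation has exactly one solution: `w` lies in the resolvent set. The spectrum is compact, so
its maximal modulus is attained and is `< 1`.
-/

open scoped ENNReal

theorem Fin.succ_sub_one_eq_castSucc {n : ℕ} (j : Fin n) : j.succ - 1 = j.castSucc := by
  simp [Fin.ext_iff, Fin.coe_sub_one]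

namespace Companion

variable {𝕜 M : Type*} [Field 𝕜] [AddCommGroup M] [Module 𝕜 M] {n : ℕ}

def pencil (A : Fin n → M →ₗ[𝕜] M) (z : 𝕜) : M →ₗ[𝕜] M :=
  1 - ∑ i, z ^ (i.val + 1) • A i

def companion (A : Fin (n + 1) → M →ₗ[𝕜] M) (x : Fin (n + 1) → M) : Fin (n + 1) → M :=
  Fin.cons (∑ i, A i (x i)) fun j => x j.castSucc

/-- `backSubst w⁻¹ y` solves `w • x (j + 1) - x j = y (j + 1)` with `x 0 = 0`. -/
def backSubst (z : 𝕜) (y : Fin (n + 1) → M) : Fin (n + 1) → M :=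
  Fin.induction (motive := fun _ => M) 0 fun j g => z • (g + y j.succ)

@[simp]
theorem backSubst_zero (z : 𝕜) (y : Fin (n + 1) → M) : backSubst z y 0 = 0 := rfl

theorem backSubst_succ (z : 𝕜) (y : Fin (n + 1) → M) (j : Fin n) :
    backSubst z y j.succ = z • (backSubst z y j.castSucc + y j.succ) := rfl

theorem tail_eqs_iff {w : 𝕜} (hw : w ≠ 0) {x y : Fin (n + 1) → M} :
    (∀ j : Fin n, w • x j.succ - x j.castSucc = y j.succ) ↔
      ∀ i, x i = w⁻¹ ^ (i : ℕ) • x 0 + backSubst w⁻¹ y i := by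
  have step : ∀ j : Fin n, w • x j.succ - x j.castSucc = y j.succ ↔
      x j.succ = w⁻¹ • (x j.castSucc + y j.succ) := fun j => by
    rw [sub_eq_iff_eq_add', eq_inv_smul_iff₀ hw]
  simp only [step]
  constructor
  · intro h i
    induction i using Fin.induction with
    | zero => simp
    | succ j ih =>
      rw [h, ih, backSubst_succ, Fin.val_succ, Fin.val_castSucc, pow_succ', mul_smul]
      simp only [smul_add, add_assoc]
  · intro h j
    rw [h, h j.castSucc, backSubst_succ, Fin.val_succ, Fin.val_castSucc, pow_succ', mul_smul]
    simp only [smul_add, add_assoc]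

theorem head_eq_iff (A : Fin (n + 1) → M →ₗ[𝕜] M) {w : 𝕜} (hw : w ≠ 0)
    {x g : Fin (n + 1) → M} (hx : ∀ i, x i = w⁻¹ ^ (i : ℕ) • x 0 + g i) (v : M) :
    w • x 0 - ∑ i, A i (x i) = v ↔ pencil A w⁻¹ (x 0) = w⁻¹ • (v + ∑ i, A i (g i)) := by
  have hsum : ∑ i, A i (x i) = w • ∑ i, w⁻¹ ^ (i.val + 1) • A i (x 0) + ∑ i, A i (g i) := by
    rw [Finset.smul_sum, ← Finset.sum_add_distrib]
    refine Finset.sum_congr rfl fun i _ => ?_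
    rw [hx i, map_add, map_smul, smul_smul, pow_succ', ← mul_assoc, mul_inv_cancel₀ hw, one_mul]
  have hP : pencil A w⁻¹ (x 0) = x 0 - ∑ i, w⁻¹ ^ (i.val + 1) • A i (x 0) := by
    simp [pencil]
  rw [hP, eq_inv_smul_iff₀ hw, hsum, smul_sub, sub_add_eq_sub_sub, sub_eq_iff_eq_add]

theorem companion_eqs_iff (A : Fin (n + 1) → M →ₗ[𝕜] M) {w : 𝕜} (hw : w ≠ 0)
    (x y : Fin (n + 1) → M) :
    (w • x 0 - ∑ i, A i (x i) = y 0 ∧ ∀ j : Fin n, w • x j.succ - x j.castSucc = y j.succ) ↔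
      (∀ i, x i = w⁻¹ ^ (i : ℕ) • x 0 + backSubst w⁻¹ y i) ∧
        pencil A w⁻¹ (x 0) = w⁻¹ • (y 0 + ∑ i, A i (backSubst w⁻¹ y i)) := by
  rw [tail_eqs_iff hw, and_comm]
  exact and_congr_right fun hx => head_eq_iff A hw hx (y 0)

theorem bijective_smul_sub_companion (A : Fin (n + 1) → M →ₗ[𝕜] M) {w : 𝕜} (hw : w ≠ 0)
    (hP : Function.Bijective (pencil A w⁻¹)) :
    Function.Bijective fun x => w • x - companion A x := by
  refine Function.bijective_iff_existsUnique _ |>.mpr fun y => ?_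
  have hcomp : ∀ x, w • x - companion A x = y ↔
      w • x 0 - ∑ i, A i (x i) = y 0 ∧ ∀ j : Fin n, w • x j.succ - x j.castSucc = y j.succ := by
    intro x
    simp [funext_iff, Fin.forall_fin_succ, companion]
  simp only [hcomp, companion_eqs_iff A hw]
  obtain ⟨x₀, hx₀⟩ := hP.2 (w⁻¹ • (y 0 + ∑ i, A i (backSubst w⁻¹ y i)))
  refine ⟨fun i => w⁻¹ ^ (i : ℕ) • x₀ + backSubst w⁻¹ y i, ?_, ?_⟩
  · simpa using hx₀
  · rintro x ⟨hx, hx0⟩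
    have : x 0 = x₀ := hP.1 (hx0.trans hx₀.symm)
    exact funext fun i => by rw [hx i, this]


theorem bijective_smul_sub_of_eq_toLp_companion {r : ℝ≥0∞} (A : Fin (n + 1) → M →ₗ[𝕜] M)
    (𝒜 : WithLp r (Fin (n + 1) → M) → WithLp r (Fin (n + 1) → M))
    (h𝒜 : ∀ x, 𝒜 x = WithLp.toLp r (companion A x.ofLp)) {w : 𝕜} (hw : w ≠ 0)
    (hP : Function.Bijective (pencil A w⁻¹)) :
    Function.Bijective fun x => w • x - 𝒜 x := by
  have h : (fun x => w • x - 𝒜 x) =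
      WithLp.toLp r ∘ (fun x => w • x - companion A x) ∘ WithLp.ofLp := by
    ext x : 1
    simp [h𝒜]
  rw [h]
  exact (WithLp.equiv r _).symm.bijective.comp
    ((bijective_smul_sub_companion A hw hP).comp (WithLp.equiv r _).bijective)

end Companion

open Companion

/-- Under Assumption (S) — the operator pencil `A(z) = I - zA₁ - ⋯ - z^p A_p` is invertible
for all `|z| ≤ 1` — the spectral radius of the companion operator `𝒜` on `H^p` is
strictly less than 1. -/
theorem stmt_4 {H : Type*} [NormedAddCommGroup H] [InnerProductSpace ℂ H]
    [CompleteSpace H] {p : ℕ} [NeZero p] (A : Fin p → H →L[ℂ] H)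
    (𝒜 : PiLp 2 (fun _ : Fin p => H) →L[ℂ] PiLp 2 (fun _ : Fin p => H))
    (h𝒜0 : ∀ x : PiLp 2 (fun _ : Fin p => H), 𝒜 x 0 = ∑ i : Fin p, A i (x i))
    (h𝒜s : ∀ (x : PiLp 2 (fun _ : Fin p => H)) (i : Fin p), i ≠ 0 → 𝒜 x i = x (i - 1))
    (hS : ∀ z : ℂ, ‖z‖ ≤ 1 →
      IsUnit ((1 : H →L[ℂ] H) - ∑ i : Fin p, z ^ (i.val + 1) • A i)) :
    spectralRadius ℂ 𝒜 < 1 := by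
  obtain ⟨n, rfl⟩ := Nat.exists_eq_succ_of_ne_zero (NeZero.ne p)
  have h𝒜 : ∀ x, 𝒜 x = WithLp.toLp 2 (companion (fun i => (A i : H →ₗ[ℂ] H)) x.ofLp) := by
    intro x
    ext i
    induction i using Fin.cases with
    | zero => simp [companion, h𝒜0]
    | succ j => simp [companion, h𝒜s x j.succ j.succ_ne_zero, Fin.succ_sub_one_eq_castSucc]
  rcases (spectrum ℂ 𝒜).eq_empty_or_nonempty with hempty | hne
  · simp [spectralRadius, hempty]
  refine spectrum.spectralRadius_lt_of_forall_lt_of_nonempty hne fun w hw => ?_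
  by_contra! hw1
  replace hw1 : 1 ≤ ‖w‖ := mod_cast hw1
  have hw0 : w ≠ 0 := norm_pos_iff.mp (one_pos.trans_le hw1)
  have hP : Function.Bijective (pencil (fun i => (A i : H →ₗ[ℂ] H)) w⁻¹) := by
    convert ContinuousLinearMap.isUnit_iff_bijective.mp
      (hS w⁻¹ (by rw [norm_inv]; exact inv_le_one_of_one_le₀ hw1)) using 1
    ext v
    simp [pencil]
  refine spectrum.mem_iff.mp hw (ContinuousLinearMap.isUnit_iff_bijective.mpr ?_)
  convert bijective_smul_sub_of_eq_toLp_companion _ 𝒜 h𝒜 hw0 hP using 1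
  ext x : 1
  simp [Algebra.algebraMap_eq_smul_one]
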